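/- arXiv:1711.02938 — 3 statements merged into one kernel-verified Lean document; each statement's English description precedes it below -/
import Mathlib

section
/- Let ψ₀(x̄) = ∑_{k̄} C(k̄) Λ_{j=1}^{N̄} e^{i k_j x_j} be a finite linear combination of antisymmetrized exponentials on T^{N̄} (each k̄ = {k_1,…,k_{N̄}} a set of distinct vectors in (2π/N)ℤ³), normalized so that ∫_{T^{N̄}} |ψ₀(x̄)|² dx̄ = Z. If any two distinct multi-indices k̄ ≠ k̄' appearing in the sum differ in at least two elements (#(k̄ \ k̄') ≥ 2), then the one-particle density ρᵉ(x) := −e ∫ ∑_{j=1}^{N̄} δ(x−x_j) |ψ₀(x̄)|² dx̄ is constant: ρᵉ(x) ≡ −eZ for all x ∈ T. -/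
/-! Expanding `|ψ₀|²` in the Slater determinants writes it as a finite combination of products
`∏ₗ e^{i qₗ·yₗ}` with `qₗ = k_{π⁻¹ l} − k'_{σ⁻¹ l}`. Over the box such a product integrates to
`N^{3M}` if every `qₗ` vanishes and to `0` otherwise, while fixing `y_j = x` only replaces the
`j`-th factor by `N³ e^{i q_j·x}`. The two integrals can thus differ only if `q` vanishes at every
site but `j`; then `k̄` and `k̄'` differ in at most one element, so `k̄ = k̄'`, and injectivity of
`k` forces `q_j = 0` as well. Hence every site contributes `Z / N³` to the density. -/

open MeasureTheory Complex Finset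

/-- Fundamental domain `[0,N)^{3M}` of the configuration space `T^M`, `T = ℝ³/Nℤ³`. -/
noncomputable def cfgBox (M N : ℕ) : Set (Fin M → Fin 3 → ℝ) :=
  Set.univ.pi fun _ => Set.univ.pi fun _ => Set.Ico (0 : ℝ) (N : ℝ)

/-- Antisymmetrized (Slater) product of plane waves `Λ_{j} e^{i k_j·x_j}`
with wave vectors `k : Fin M → (Fin 3 → ℝ)`. -/
noncomputable def slater (M : ℕ) (k : Fin M → Fin 3 → ℝ) (x : Fin M → Fin 3 → ℝ) : ℂ :=
  (Real.sqrt (Nat.factorial M) : ℂ)⁻¹ *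
    ∑ π : Equiv.Perm (Fin M), (Equiv.Perm.sign π : ℤ) *
      ∏ j, Complex.exp (Complex.I * (∑ i, k j i * x (π j) i : ℝ))

/-- Lattice wave vector `(2π/N)·k` for `k ∈ ℤ³`. -/
noncomputable def waveVec (N : ℕ) (k : Fin 3 → ℤ) : Fin 3 → ℝ :=
  fun i => 2 * Real.pi / (N : ℝ) * (k i : ℝ)

/-- One-particle charge density `ρᵉ(x) = −e ∑_j ∫ |ψ(x̄)|²|_{x_j = x} dx̄'`
(the integral over the remaining `M−1` variables is realized by integrating over all
`M` variables and dividing by the volume `N³` of the overwritten one). -/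
noncomputable def oneParticleDensity (M N : ℕ) (e : ℝ) (ψ : (Fin M → Fin 3 → ℝ) → ℂ)
    (x : Fin 3 → ℝ) : ℝ :=
  -e * ∑ j : Fin M,
    (∫ y in cfgBox M N, ‖ψ (Function.update y j x)‖ ^ 2) / (N : ℝ) ^ 3

open ComplexConjugate

section PiIntegral

variable {ι : Type*} [Fintype ι] {α : ι → Type*} [∀ i, MeasureSpace (α i)]
  [∀ i, SigmaFinite (volume : Measure (α i))] {𝕜 : Type*} [RCLike 𝕜]

theorem setIntegral_univ_pi_prod (s : ∀ i, Set (α i)) (f : ∀ i, α i → 𝕜) :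
    ∫ y in Set.univ.pi s, ∏ i, f i (y i) = ∏ i, ∫ v in s i, f i v := by
  rw [volume_pi, Measure.restrict_pi_pi, integral_fintype_prod_eq_prod]

theorem setIntegral_univ_pi_prod_update [DecidableEq ι] (s : ∀ i, Set (α i))
    (f : ∀ i, α i → 𝕜) (j : ι) (x : α j) :
    ∫ y in Set.univ.pi s, ∏ i, f i (Function.update y j x i)
      = (volume.real (s j) • f j x) * ∏ i ∈ univ.erase j, ∫ v in s i, f i v := by
  have hupd : ∀ y : ∀ i, α i, ∏ i, f i (Function.update y j x i)
      = ∏ i, Function.update f j (fun _ => f j x) i (y i) := fun y =>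
    prod_congr rfl fun i _ => by
      rcases eq_or_ne i j with rfl | hij <;> simp [*]
  simp_rw [hupd, setIntegral_univ_pi_prod, ← mul_prod_erase univ _ (mem_univ j),
    Function.update_self, setIntegral_const]
  congr 1
  exact prod_congr rfl fun i hi => by rw [Function.update_of_ne (ne_of_mem_erase hi)]

end PiIntegral

theorem integral_Ico_exp_two_pi_int_mul {N : ℕ} (hN : 0 < N) (m : ℤ) :
    ∫ t in Set.Ico (0 : ℝ) N, exp (I * (2 * Real.pi / N * m) * t)
      = if m = 0 then (N : ℂ) else 0 := by
  rw [setIntegral_congr_set Ico_ae_eq_Ioc, ← intervalIntegral.integral_of_le (Nat.cast_nonneg N)]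
  split_ifs with hm
  · simp [hm]
  have hN' : (N : ℂ) ≠ 0 := by exact_mod_cast hN.ne'
  have hc : I * (2 * Real.pi / N * m) ≠ 0 := by
    have : (m : ℂ) ≠ 0 := by exact_mod_cast hm
    simp [hN', this, Real.pi_ne_zero]
  have hperiod : I * (2 * Real.pi / N * m) * (N : ℝ) = m * (2 * Real.pi * I) := by
    push_cast; field_simp
  rw [integral_exp_mul_complex hc, hperiod, exp_int_mul_two_pi_mul_I]
  simp

noncomputable def torusCell (N : ℕ) : Set (Fin 3 → ℝ) :=
  Set.univ.pi fun _ => Set.Ico (0 : ℝ) N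

theorem cfgBox_eq_pi (M N : ℕ) : cfgBox M N = Set.univ.pi fun _ : Fin M => torusCell N := rfl

theorem volume_real_torusCell (N : ℕ) : volume.real (torusCell N) = (N : ℝ) ^ 3 := by
  simp [torusCell, measureReal_def, volume_pi_pi, Real.volume_Ico]

theorem Continuous.integrableOn_cfgBox {M N : ℕ} {F : (Fin M → Fin 3 → ℝ) → ℂ}
    (hF : Continuous F) : IntegrableOn F (cfgBox M N) :=
  (hF.integrableOn_Icc (a := 0) (b := fun _ _ => (N : ℝ))).mono_set fun _ hy =>
    ⟨fun l i => (hy l trivial i trivial).1, fun l i => (hy l trivial i trivial).2.le⟩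

noncomputable def latticePhase (N : ℕ) (m : Fin 3 → ℤ) (v : Fin 3 → ℝ) : ℂ :=
  exp (I * (∑ i, waveVec N m i * v i : ℝ))

theorem latticePhase_zero (N : ℕ) (v : Fin 3 → ℝ) : latticePhase N 0 v = 1 := by
  simp [latticePhase, waveVec]

@[fun_prop]
theorem continuous_latticePhase (N : ℕ) (m : Fin 3 → ℤ) : Continuous (latticePhase N m) := by
  unfold latticePhase
  fun_prop

theorem latticePhase_mul_conj (N : ℕ) (m m' : Fin 3 → ℤ) (v : Fin 3 → ℝ) :
    latticePhase N m v * conj (latticePhase N m' v) = latticePhase N (m - m') v := by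
  simp only [latticePhase, ← exp_conj, ← exp_add, map_mul, conj_I, conj_ofReal]
  congr 1
  simp only [waveVec, Pi.sub_apply]
  push_cast
  simp only [mul_sub, sub_mul, sum_sub_distrib]
  ring

theorem latticePhase_eq_prod (N : ℕ) (m : Fin 3 → ℤ) (v : Fin 3 → ℝ) :
    latticePhase N m v = ∏ i, exp (I * (2 * Real.pi / N * m i) * v i) := by
  rw [latticePhase, ← exp_sum, ofReal_sum, mul_sum]
  simp only [waveVec]
  push_cast
  simp only [mul_assoc]

theorem setIntegral_latticePhase {N : ℕ} (hN : 0 < N) (m : Fin 3 → ℤ) :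
    ∫ v in torusCell N, latticePhase N m v = if m = 0 then (N : ℂ) ^ 3 else 0 := by
  simp_rw [latticePhase_eq_prod]
  rw [torusCell, setIntegral_univ_pi_prod _ fun i (t : ℝ) => exp (I * (2 * Real.pi / N * m i) * t)]
  simp_rw [integral_Ico_exp_two_pi_int_mul hN, prod_ite_zero, funext_iff]
  simp

def IntegralInvariantUnder {β : Type*} [MeasurableSpace β] (μ : Measure β) (s : Set β)
    (u : β → β) (F : β → ℂ) : Prop :=
  IntegrableOn F s μ ∧ IntegrableOn (fun y => F (u y)) s μ ∧
    ∫ y in s, F (u y) ∂μ = ∫ y in s, F y ∂μ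

namespace IntegralInvariantUnder

variable {β : Type*} [MeasurableSpace β] {μ : Measure β} {s : Set β} {u : β → β}

theorem const_mul {F : β → ℂ} (h : IntegralInvariantUnder μ s u F) (c : ℂ) :
    IntegralInvariantUnder μ s u fun y => c * F y :=
  ⟨h.1.const_mul c, h.2.1.const_mul c, by
    simp only [integral_const_mul, h.2.2]⟩

theorem finsetSum {ι : Type*} (t : Finset ι) {F : ι → β → ℂ}
    (h : ∀ i ∈ t, IntegralInvariantUnder μ s u (F i)) :
    IntegralInvariantUnder μ s u fun y => ∑ i ∈ t, F i y := by
  refine ⟨integrable_finsetSum t fun i hi => (h i hi).1,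
    integrable_finsetSum t fun i hi => (h i hi).2.1, ?_⟩
  simp only [integral_finsetSum t fun i hi => (h i hi).2.1,
    integral_finsetSum t fun i hi => (h i hi).1]
  exact sum_congr rfl fun i hi => (h i hi).2.2

end IntegralInvariantUnder

theorem integralInvariantUnder_update_prod_latticePhase {M N : ℕ} (hN : 0 < N)
    (d : Fin M → Fin 3 → ℤ) (j : Fin M) (x : Fin 3 → ℝ) (hd : (∀ l ≠ j, d l = 0) → d j = 0) :
    IntegralInvariantUnder volume (cfgBox M N) (Function.update · j x)
      fun y => ∏ l, latticePhase N (d l) (y l) := by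
  refine ⟨Continuous.integrableOn_cfgBox (by fun_prop),
    Continuous.integrableOn_cfgBox (by fun_prop), ?_⟩
  rw [cfgBox_eq_pi, setIntegral_univ_pi_prod_update, setIntegral_univ_pi_prod,
    ← mul_prod_erase univ _ (mem_univ j)]
  simp only [setIntegral_latticePhase hN, prod_ite_zero, volume_real_torusCell, mem_erase,
    and_imp]
  by_cases hoff : ∀ l ≠ j, d l = 0
  · simp [hd hoff, latticePhase_zero]
  · simp [hoff]

section Combinatorics

variable {ι α : Type*} [Fintype ι] [DecidableEq α]

theorem image_sdiff_image_subset_singleton {a b : ι → α} {j : ι} (h : ∀ l ≠ j, a l = b l) :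
    univ.image a \ univ.image b ⊆ {a j} := by
  intro v hv
  obtain ⟨hva, hvb⟩ := mem_sdiff.mp hv
  obtain ⟨l, -, rfl⟩ := mem_image.mp hva
  by_cases hl : l = j
  · simp [hl]
  · exact absurd (mem_image.mpr ⟨l, mem_univ l, (h l hl).symm⟩) hvb

theorem apply_eq_of_image_eq_of_forall_ne {a b : ι → α} (ha : Function.Injective a)
    (himage : univ.image a = univ.image b) {j : ι} (h : ∀ l ≠ j, a l = b l) : a j = b j := by
  obtain ⟨l, -, hl⟩ := mem_image.mp (himage ▸ mem_image_of_mem a (mem_univ j))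
  by_cases hlj : l = j
  · rw [← hl, hlj]
  · exact absurd (ha (hl ▸ h l hlj)) hlj

theorem apply_perm_eq_of_forall_ne {k k' : ι → α} (hk : Function.Injective k)
    (hsep : k ≠ k' → 2 ≤ (univ.image k \ univ.image k').card) (π σ : Equiv.Perm ι) {j : ι}
    (h : ∀ l ≠ j, k (π.symm l) = k' (σ.symm l)) : k (π.symm j) = k' (σ.symm j) := by
  have himage : ∀ (f : ι → α) (τ : Equiv.Perm ι), univ.image (f ∘ τ) = univ.image f := by
    intro f τ
    classical
    rw [← image_image, image_univ_equiv]
  have hkk' : k = k' := by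
    by_contra hne
    have hsub := image_sdiff_image_subset_singleton (a := k ∘ π.symm) (b := k' ∘ σ.symm) h
    rw [himage, himage] at hsub
    have hle := (card_le_card hsub).trans_eq (card_singleton _)
    have hge := hsep hne
    omega
  subst hkk'
  exact apply_eq_of_image_eq_of_forall_ne (a := k ∘ π.symm) (b := k ∘ σ.symm)
    (hk.comp π.symm.injective) (by rw [himage, himage]) h

end Combinatorics

theorem slater_waveVec (M N : ℕ) (k : Fin M → Fin 3 → ℤ) (z : Fin M → Fin 3 → ℝ) :
    slater M (fun j => waveVec N (k j)) z = (Real.sqrt M.factorial : ℂ)⁻¹ *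
      ∑ π : Equiv.Perm (Fin M),
        (Equiv.Perm.sign π : ℤ) * ∏ l, latticePhase N (k (π.symm l)) (z l) := by
  unfold slater
  congr 1
  refine sum_congr rfl fun π _ => ?_
  rw [← Equiv.prod_comp π fun l => latticePhase N (k (π.symm l)) (z l)]
  simp [latticePhase]

theorem slater_mul_conj_slater (M N : ℕ) (k k' : Fin M → Fin 3 → ℤ) (z : Fin M → Fin 3 → ℝ) :
    slater M (fun j => waveVec N (k j)) z * conj (slater M (fun j => waveVec N (k' j)) z)
      = ∑ π : Equiv.Perm (Fin M), ∑ σ : Equiv.Perm (Fin M),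
          ((Equiv.Perm.sign π * Equiv.Perm.sign σ : ℤ) / M.factorial : ℂ) *
            ∏ l, latticePhase N (k (π.symm l) - k' (σ.symm l)) (z l) := by
  have hnorm : (Real.sqrt M.factorial : ℂ)⁻¹ * conj (Real.sqrt M.factorial : ℂ)⁻¹
      = (M.factorial : ℂ)⁻¹ := by
    rw [map_inv₀, conj_ofReal, ← mul_inv, ← ofReal_mul, Real.mul_self_sqrt (Nat.cast_nonneg _)]
    simp
  rw [slater_waveVec, slater_waveVec, map_mul, map_sum, mul_mul_mul_comm, hnorm, sum_mul_sum,
    mul_sum]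
  refine sum_congr rfl fun π _ => ?_
  rw [mul_sum]
  refine sum_congr rfl fun σ _ => ?_
  simp_rw [← latticePhase_mul_conj, prod_mul_distrib, map_mul, map_prod, map_intCast]
  push_cast
  ring

theorem integralInvariantUnder_update_slater_mul_conj {M N : ℕ} (hN : 0 < N)
    {k k' : Fin M → Fin 3 → ℤ} (hk : Function.Injective k)
    (hsep : k ≠ k' → 2 ≤ (univ.image k \ univ.image k').card) (j : Fin M) (x : Fin 3 → ℝ) :
    IntegralInvariantUnder volume (cfgBox M N) (Function.update · j x) fun z =>
      slater M (fun j => waveVec N (k j)) z * conj (slater M (fun j => waveVec N (k' j)) z) := by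
  simp_rw [slater_mul_conj_slater]
  refine .finsetSum _ fun π _ => .finsetSum _ fun σ _ =>
    (integralInvariantUnder_update_prod_latticePhase hN _ j x fun hoff => ?_).const_mul _
  exact sub_eq_zero.mpr
    (apply_perm_eq_of_forall_ne hk hsep π σ fun l hl => sub_eq_zero.mp (hoff l hl))

theorem setIntegral_norm_sq_sum_slater_update {M N : ℕ} (hN : 0 < N)
    (K : Finset (Fin M → Fin 3 → ℤ)) (C : (Fin M → Fin 3 → ℤ) → ℂ)
    (hdist : ∀ k ∈ K, Function.Injective k)
    (hsep : ∀ k ∈ K, ∀ k' ∈ K, k ≠ k' → 2 ≤ (univ.image k \ univ.image k').card)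
    (j : Fin M) (x : Fin 3 → ℝ) :
    ∫ y in cfgBox M N,
        ‖∑ k ∈ K, C k * slater M (fun j => waveVec N (k j)) (Function.update y j x)‖ ^ 2
      = ∫ y in cfgBox M N, ‖∑ k ∈ K, C k * slater M (fun j => waveVec N (k j)) y‖ ^ 2 := by
  set ψ := fun z => ∑ k ∈ K, C k * slater M (fun j => waveVec N (k j)) z
  have hexpand : ∀ z, ((‖ψ z‖ ^ 2 : ℝ) : ℂ) = ∑ k ∈ K, ∑ k' ∈ K, C k * conj (C k') *
      (slater M (fun j => waveVec N (k j)) z * conj (slater M (fun j => waveVec N (k' j)) z)) := by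
    intro z
    rw [← normSq_eq_norm_sq, ← mul_conj, map_sum, sum_mul_sum]
    refine sum_congr rfl fun k _ => sum_congr rfl fun k' _ => ?_
    rw [map_mul]
    ring
  have hinv : IntegralInvariantUnder volume (cfgBox M N) (Function.update · j x)
      fun z => ((‖ψ z‖ ^ 2 : ℝ) : ℂ) := by
    simp_rw [hexpand]
    exact .finsetSum _ fun k hk => .finsetSum _ fun k' hk' =>
      (integralInvariantUnder_update_slater_mul_conj hN (hdist k hk) (hsep k hk k' hk') j x
        ).const_mul _
  have h := hinv.2.2
  dsimp only at h
  rw [integral_complex_ofReal, integral_complex_ofReal] at h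
  exact_mod_cast h

theorem stmt_1_general (N : ℕ) (hN : 0 < N) (e Z : ℝ)
    (K : Finset (Fin (N ^ 3) → Fin 3 → ℤ)) (C : (Fin (N ^ 3) → Fin 3 → ℤ) → ℂ)
    (hdist : ∀ k ∈ K, Function.Injective k)
    (hadr : ∀ k ∈ K, ∀ k' ∈ K, k ≠ k' →
      2 ≤ (Finset.image k Finset.univ \ Finset.image k' Finset.univ).card)
    (ψ₀ : (Fin (N ^ 3) → Fin 3 → ℝ) → ℂ)
    (hψ₀ : ψ₀ = fun x => ∑ k ∈ K, C k * slater (N ^ 3) (fun j => waveVec N (k j)) x)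
    (hnorm : ∫ x in cfgBox (N ^ 3) N, ‖ψ₀ x‖ ^ 2 = Z) :
    ∀ x : Fin 3 → ℝ, oneParticleDensity (N ^ 3) N e ψ₀ x = -e * Z := by
  intro x
  subst hψ₀
  have hsite : ∀ j, ∫ y in cfgBox (N ^ 3) N,
      ‖∑ k ∈ K, C k * slater (N ^ 3) (fun j => waveVec N (k j)) (Function.update y j x)‖ ^ 2 = Z :=
    fun j => (setIntegral_norm_sq_sum_slater_update hN K C hdist hadr j x).trans hnorm
  have hN3 : (N : ℝ) ^ 3 ≠ 0 := by positivity
  simp only [oneParticleDensity, hsite, sum_const, card_univ, Fintype.card_fin, nsmul_eq_mul]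
  push_cast
  field_simp

/-- If `ψ₀ = ∑_{k̄} C(k̄) Λ_j e^{i k_j x_j}` is normalized in `L²(T^{N̄})` with total
charge `Z`, each `k̄` consists of distinct wave vectors, distinct multi-indices represent
distinct sets, and any two distinct sets differ in at least two elements, then the
one-particle density is uniform: `ρᵉ(x) ≡ −eZ`. -/
theorem stmt_1 (N : ℕ) (hN : 0 < N) (e Z : ℝ)
    (K : Finset (Fin (N ^ 3) → Fin 3 → ℤ)) (C : (Fin (N ^ 3) → Fin 3 → ℤ) → ℂ)
    (hdist : ∀ k ∈ K, Function.Injective k)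
    (hsets : ∀ k ∈ K, ∀ k' ∈ K, k ≠ k' →
      Finset.image k Finset.univ ≠ Finset.image k' Finset.univ)
    (hadr : ∀ k ∈ K, ∀ k' ∈ K, k ≠ k' →
      2 ≤ (Finset.image k Finset.univ \ Finset.image k' Finset.univ).card)
    (ψ₀ : (Fin (N ^ 3) → Fin 3 → ℝ) → ℂ)
    (hψ₀ : ψ₀ = fun x => ∑ k ∈ K, C k * slater (N ^ 3) (fun j => waveVec N (k j)) x)
    (hnorm : ∫ x in cfgBox (N ^ 3) N, ‖ψ₀ x‖ ^ 2 = Z) :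
    ∀ x : Fin 3 → ℝ, oneParticleDensity (N ^ 3) N e ψ₀ x = -e * Z :=
  stmt_1_general N hN e Z K C hdist hadr ψ₀ hψ₀ hnorm
end

section
/- For σ₁(x) = eZ χ(x₁)χ(x₂)χ(x₃) (the simplest Jellium density), the Wiener condition fails: for any θ = (0,θ₂,θ₃) ∈ (2π/N)ℤ³ \ 2πℤ³ with vanishing first component, the matrix Σ(θ) = ∑_{m∈ℤ³} [(ξ⊗ξ/|ξ|²)|σ̃₁(ξ)|²]_{ξ=θ+2πm} is degenerate, i.e. has determinant zero; in fact Σ(θ)e₁ = 0. -/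
open Complex Finset Matrix

noncomputable def SigmaMat (c : (Fin 3 → ℝ) → ℂ) (θ : Fin 3 → ℝ) :
    Matrix (Fin 3) (Fin 3) ℝ :=
  fun a b => ∑' m : Fin 3 → ℤ,
    (θ a + 2 * Real.pi * (m a : ℝ)) * (θ b + 2 * Real.pi * (m b : ℝ)) /
        (∑ i, (θ i + 2 * Real.pi * (m i : ℝ)) ^ 2) *
      ‖c (fun i => θ i + 2 * Real.pi * (m i : ℝ))‖ ^ 2

/-- `χ̃(s) = 2 sin(s/2)/s` for `s ≠ 0`, `χ̃(0) = 1`. -/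
noncomputable def chiTilde (s : ℝ) : ℝ :=
  if s = 0 then 1 else 2 * Real.sin (s / 2) / s

/-- For the simplest Jellium density `σ₁`, whose Fourier coefficients are
`σ̃₁(ξ) = eZ χ̃(ξ₁)χ̃(ξ₂)χ̃(ξ₃)`, the Wiener condition fails: for any
`θ = (0,θ₂,θ₃) ∈ (2π/N)ℤ³ \ 2πℤ³` the matrix `Σ(θ)` annihilates `e₁` and is degenerate. -/
theorem stmt_6 (N : ℕ) (hN : 0 < N) (e Z : ℝ)
    (c : (Fin 3 → ℝ) → ℂ)
    (hc : c = fun ξ => ((e * Z * ∏ i, chiTilde (ξ i) : ℝ) : ℂ))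
    (k₀ : Fin 3 → ℤ) (hfirst : k₀ 0 = 0) (hk₀ : ¬ ∀ i, (N : ℤ) ∣ k₀ i) :
    (SigmaMat c (waveVec N k₀)).mulVec (Pi.single 0 1) = 0 ∧
    (SigmaMat c (waveVec N k₀)).det = 0 := by
  have hθ0 : waveVec N k₀ 0 = 0 := by simp [waveVec, hfirst]
  have hcol : ∀ a, SigmaMat c (waveVec N k₀) a 0 = 0 := by
    intro a
    unfold SigmaMat
    have hzero : (fun m : Fin 3 → ℤ =>
        (waveVec N k₀ a + 2 * Real.pi * (m a : ℝ)) *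
            (waveVec N k₀ 0 + 2 * Real.pi * (m 0 : ℝ)) /
          (∑ i, (waveVec N k₀ i + 2 * Real.pi * (m i : ℝ)) ^ 2) *
        ‖c (fun i => waveVec N k₀ i + 2 * Real.pi * (m i : ℝ))‖ ^ 2)
        = fun _ => (0 : ℝ) := by
      funext m
      by_cases hm : m 0 = 0
      · rw [hθ0, hm]
        simp
      · have hξ0 : waveVec N k₀ 0 + 2 * Real.pi * (m 0 : ℝ)
            = 2 * Real.pi * (m 0 : ℝ) := by rw [hθ0, zero_add]
        have hs : (2 * Real.pi * (m 0 : ℝ)) ≠ 0 := by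
          have : (m 0 : ℝ) ≠ 0 := Int.cast_ne_zero.mpr hm
          positivity
        have hchi : chiTilde (2 * Real.pi * (m 0 : ℝ)) = 0 := by
          rw [chiTilde, if_neg hs]
          have : 2 * Real.pi * (m 0 : ℝ) / 2 = (m 0 : ℝ) * Real.pi := by ring
          rw [this, Real.sin_int_mul_pi]
          simp
        have hcz : c (fun i => waveVec N k₀ i + 2 * Real.pi * (m i : ℝ)) = 0 := by
          rw [hc]
          simp only
          rw [Finset.prod_eq_zero (Finset.mem_univ (0 : Fin 3)) (by rw [hξ0]; exact hchi)]
          simp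
        rw [hcz]
        simp
    rw [hzero, tsum_zero]
  constructor
  · funext a
    simp [Matrix.mulVec_single, hcol a]
  · exact Matrix.det_eq_zero_of_column_eq_zero 0 hcol
end

section
/- If σ ∈ L²(T) satisfies σ̃(ξ) ≠ 0 for all ξ ∈ (2π/N)ℤ³ \ 2πℤ³, then the Wiener condition holds: the matrix Σ(θ) = ∑_{m∈ℤ³}[(ξ⊗ξ/|ξ|²)|σ̃(ξ)|²]_{ξ=θ+2πm} is positive definite for every θ ∈ (2π/N)ℤ³ \ 2πℤ³. -/
/-!
Writing `ξ_m = θ + 2πm`, the matrix `Σ(θ)` is the convergent sum over `m ∈ ℤ³` of the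
orthogonal projections onto `ℝ ξ_m`, weighted by `|σ̃(ξ_m)|²`. Each term is positive
semidefinite, so `Σ(θ)` is too, and `xᵀ Σ(θ) x > 0` as soon as one term with a nonzero
weight has `x · ξ_m ≠ 0`. All weights are nonzero, since `ξ_m = (2π/N)(k₀ + N m)` and
`k₀ + N m ∉ Nℤ³`; and for `x ≠ 0` some `ξ_m` is not orthogonal to `x`, because
`x · ξ_{e_i} - x · ξ_0 = 2π xᵢ`.
-/

open Complex Finset Matrix

namespace Matrix

section Summation

variable {ι m n R : Type*} [AddCommMonoid R] [TopologicalSpace R] [T2Space R]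

theorem tsum_apply {A : ι → Matrix m n R} (hA : Summable A) (a : m) (b : n) :
    (∑' i, A i) a b = ∑' i, A i a b :=
  (hA.hasSum.map (entryAddMonoidHom R a b) (continuous_id.matrix_elem a b)).tsum_eq.symm

end Summation

section PosDef

variable {ι n 𝕜 : Type*} [Fintype n] [RCLike 𝕜]

open scoped ComplexOrder

theorem _root_.HasSum.dotProduct_mulVec {A : ι → Matrix n n 𝕜} {S : Matrix n n 𝕜} (hA : HasSum A S)
    (x y : n → 𝕜) : HasSum (fun i => x ⬝ᵥ A i *ᵥ y) (x ⬝ᵥ S *ᵥ y) :=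
  let L : Matrix n n 𝕜 →+ 𝕜 :=
    { toFun := fun M => x ⬝ᵥ M *ᵥ y
      map_zero' := by simp
      map_add' := fun M M' => by simp [add_mulVec, dotProduct_add] }
  hA.map L (continuous_const.dotProduct (continuous_id.matrix_mulVec continuous_const))

theorem posDef_tsum {A : ι → Matrix n n 𝕜} (hA : Summable A) (hpsd : ∀ i, (A i).PosSemidef)
    (hpos : ∀ x : n → 𝕜, x ≠ 0 → ∃ i, 0 < star x ⬝ᵥ A i *ᵥ x) : (∑' i, A i).PosDef := by
  refine .of_dotProduct_mulVec_pos ?_ fun x hx => ?_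
  · rw [IsHermitian, conjTranspose_tsum]
    exact tsum_congr fun i => (hpsd i).isHermitian
  · obtain ⟨i, hi⟩ := hpos x hx
    have hsum := hA.hasSum.dotProduct_mulVec (star x) x
    rw [← hsum.tsum_eq]
    exact hsum.summable.tsum_pos (fun j => (hpsd j).dotProduct_mulVec_nonneg x) i hi

end PosDef

section LineProj

variable {ι n : Type*} [Fintype n]

/-- Equals `0` when `v = 0`, matching the junk `0 / 0` terms of `SigmaMat`. -/
noncomputable def lineProj (v : n → ℝ) : Matrix n n ℝ := (v ⬝ᵥ v)⁻¹ • vecMulVec v v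

theorem lineProj_apply (v : n → ℝ) (a b : n) :
    lineProj v a b = v a * v b / ∑ i, v i ^ 2 := by
  simp only [lineProj, smul_apply, vecMulVec_apply, dotProduct, smul_eq_mul, sq]
  ring

theorem abs_lineProj_apply_le_one (v : n → ℝ) (a b : n) : |lineProj v a b| ≤ 1 := by
  have hsq : ∀ a, v a ^ 2 ≤ ∑ i, v i ^ 2 := fun a =>
    single_le_sum (fun i _ => sq_nonneg (v i)) (mem_univ a)
  rw [lineProj_apply, abs_div, abs_of_nonneg (sum_nonneg fun i _ => sq_nonneg (v i)), abs_mul]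
  refine div_le_one_of_le₀ ?_ (sum_nonneg fun i _ => sq_nonneg (v i))
  nlinarith [hsq a, hsq b, sq_abs (v a), sq_abs (v b), sq_nonneg (|v a| - |v b|)]

theorem posSemidef_lineProj (v : n → ℝ) : (lineProj v).PosSemidef :=
  (posSemidef_vecMulVec_self_star v).smul (inv_nonneg.mpr (dotProduct_self_star_nonneg v))

theorem dotProduct_lineProj_mulVec (x v : n → ℝ) :
    x ⬝ᵥ lineProj v *ᵥ x = (x ⬝ᵥ v) ^ 2 / (v ⬝ᵥ v) := by
  rw [lineProj, smul_mulVec, dotProduct_smul, vecMulVec_mulVec, op_smul_eq_smul, dotProduct_smul,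
    dotProduct_comm v x, smul_eq_mul, smul_eq_mul]
  ring

theorem dotProduct_lineProj_mulVec_pos {x v : n → ℝ} (h : x ⬝ᵥ v ≠ 0) :
    0 < x ⬝ᵥ lineProj v *ᵥ x := by
  have hv : v ≠ 0 := by rintro rfl; exact h (dotProduct_zero x)
  rw [dotProduct_lineProj_mulVec]
  exact div_pos (sq_pos_of_ne_zero h) ((dotProduct_self_star_nonneg v).lt_of_ne
    (Ne.symm (dotProduct_self_eq_zero.not.mpr hv)))

theorem summable_smul_lineProj {w : ι → ℝ} (hw : Summable w) (v : ι → n → ℝ) :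
    Summable fun i => w i • lineProj (v i) := by
  refine Pi.summable.mpr fun a => Pi.summable.mpr fun b => hw.abs.of_norm_bounded fun i => ?_
  rw [Real.norm_eq_abs, smul_apply, smul_eq_mul, abs_mul]
  exact mul_le_of_le_one_right (abs_nonneg _) (abs_lineProj_apply_le_one _ a b)

end LineProj

end Matrix

noncomputable def latticeShift {n : Type*} (θ : n → ℝ) (m : n → ℤ) : n → ℝ :=
  fun i => θ i + 2 * Real.pi * m i

theorem exists_dotProduct_latticeShift_ne_zero {n : Type*} [Fintype n] [DecidableEq n]
    (θ : n → ℝ) {x : n → ℝ} (hx : x ≠ 0) : ∃ m, x ⬝ᵥ latticeShift θ m ≠ 0 := by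
  obtain ⟨i, hi : x i ≠ 0⟩ := Function.ne_iff.mp hx
  have h₀ : x ⬝ᵥ latticeShift θ 0 = x ⬝ᵥ θ := by simp [latticeShift, dotProduct]
  have hᵢ : x ⬝ᵥ latticeShift θ (Pi.single i 1) = x ⬝ᵥ θ + 2 * Real.pi * x i := by
    simp [latticeShift, dotProduct, mul_add, sum_add_distrib, Pi.single_apply]
    ring
  by_contra! h
  rw [h, eq_comm, ← h₀, h, zero_add] at hᵢ
  simp [Real.pi_ne_zero, hi] at hᵢ

theorem waveVec_add_smul {N : ℕ} (hN : N ≠ 0) (k m : Fin 3 → ℤ) :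
    waveVec N (k + (N : ℤ) • m) = latticeShift (waveVec N k) m := by
  funext i
  simp only [waveVec, latticeShift, Pi.add_apply, Pi.smul_apply, smul_eq_mul]
  push_cast
  field_simp

theorem sigmaMat_eq_tsum (c : (Fin 3 → ℝ) → ℂ) (θ : Fin 3 → ℝ)
    (hc : Summable fun m => ‖c (latticeShift θ m)‖ ^ 2) :
    SigmaMat c θ = ∑' m, ‖c (latticeShift θ m)‖ ^ 2 • lineProj (latticeShift θ m) := by
  ext a b
  rw [Matrix.tsum_apply (summable_smul_lineProj hc (latticeShift θ))]
  refine tsum_congr fun m => ?_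
  rw [Matrix.smul_apply, lineProj_apply, smul_eq_mul, mul_comm]
  rfl

/-- If the Fourier coefficients of `σ ∈ L²(T)` do not vanish on `(2π/N)ℤ³ \ 2πℤ³`, then
the Wiener condition holds: `Σ(θ)` is positive definite for every
`θ ∈ (2π/N)ℤ³ \ 2πℤ³`. -/
theorem stmt_7 (N : ℕ) (hN : 0 < N) (c : (Fin 3 → ℝ) → ℂ)
    (hL2 : Summable fun k : Fin 3 → ℤ => ‖c (waveVec N k)‖ ^ 2)
    (hnz : ∀ k : Fin 3 → ℤ, ¬ (∀ i, (N : ℤ) ∣ k i) → c (waveVec N k) ≠ 0) :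
    ∀ k₀ : Fin 3 → ℤ, ¬ (∀ i, (N : ℤ) ∣ k₀ i) →
      (SigmaMat c (waveVec N k₀)).PosDef := by
  intro k₀ hk₀
  set θ := waveVec N k₀
  have hshift (m : Fin 3 → ℤ) : latticeShift θ m = waveVec N (k₀ + (N : ℤ) • m) :=
    (waveVec_add_smul hN.ne' k₀ m).symm
  have hw : Summable fun m => ‖c (latticeShift θ m)‖ ^ 2 := by
    simpa only [hshift, Function.comp_def] using hL2.comp_injective
      ((add_right_injective k₀).comp (smul_right_injective _ (Int.natCast_ne_zero.mpr hN.ne')))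
  rw [sigmaMat_eq_tsum c θ hw]
  refine posDef_tsum (summable_smul_lineProj hw _)
    (fun m => (posSemidef_lineProj _).smul (sq_nonneg _)) fun x hx => ?_
  obtain ⟨m, hm⟩ := exists_dotProduct_latticeShift_ne_zero θ hx
  have hcm : c (latticeShift θ m) ≠ 0 := hshift m ▸ hnz _ fun h =>
    hk₀ fun i => (dvd_add_left (dvd_mul_right _ (m i))).mp (h i)
  refine ⟨m, ?_⟩
  rw [star_trivial, smul_mulVec, dotProduct_smul, smul_eq_mul]
  exact mul_pos (by positivity) (dotProduct_lineProj_mulVec_pos hm)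
end
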